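/- arXiv:2408.05503 — 3 statements merged into one kernel-verified Lean document; each statement's English description precedes it below -/
import Mathlib

section
/- Let β₁ be a real number, and let V, T, V_S, T_S be random variables such that V_S is conditionally independent of T given V, and T_S is conditionally independent of V given T. Then the modality-invariant objective satisfies the identity −(I(T;V_S) + I(V;T_S)) + β₁(I(V;V_S|T) + I(T;T_S|V)) = −(1+β₁)(I(T;V_S) + I(V;T_S)) + β₁(I(V;V_S) + I(T;T_S)); that is, the objective L_S is equal to an information-bottleneck objective expressed without conditional mutual information terms. -/
/-!
Two entropy identities do all the work. The chain rule `H(X, Z) = H(Z) + H(X | Z)` gives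
`I(X;Y|Z) = H(X,Z) + H(Y,Z) - H(X,Y,Z) - H(Z)`. Conditional independence `X ⊥ Y | Z` says
`p(x,y,z) p(z) = p(x,z) p(y,z)`; taking logarithms on the support and averaging against
`p(x,y,z)` gives `H(X,Y,Z) + H(Z) = H(X,Z) + H(Y,Z)`. Combined, `X ⊥ Y | Z` yields
`I(Z;X|Y) = I(Z;X) - I(Y;X)`, and substituting this for both conditional terms of `L_S`
leaves a linear identity in the mutual informations.
-/

open MeasureTheory ProbabilityTheory

namespace DisNCL

variable {Ω : Type*} [MeasurableSpace Ω]

/-- The probability that a random variable `X` takes the value `x`. -/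
noncomputable def pr {S : Type*} (μ : Measure Ω) (X : Ω → S) (x : S) : ℝ :=
  (μ {ω | X ω = x}).toReal

/-- Shannon entropy `H(X)` of a finitely-valued random variable. -/
noncomputable def H {S : Type*} [Fintype S] (μ : Measure Ω) (X : Ω → S) : ℝ :=
  -∑ x, pr μ X x * Real.log (pr μ X x)

/-- Conditional entropy `H(X | Y) = ∑ y P(Y = y) H(X | Y = y)`, where the inner entropy
is taken under the conditional measure given `Y = y`. -/
noncomputable def condH {S T : Type*} [Fintype S] [Fintype T]
    (μ : Measure Ω) (X : Ω → S) (Y : Ω → T) : ℝ :=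
  ∑ y, pr μ Y y * H (ProbabilityTheory.cond μ {ω | Y ω = y}) X

/-- Mutual information `I(X;Y) = H(X) + H(Y) - H(X,Y)`. -/
noncomputable def MI {S T : Type*} [Fintype S] [Fintype T]
    (μ : Measure Ω) (X : Ω → S) (Y : Ω → T) : ℝ :=
  H μ X + H μ Y - H μ (fun ω => (X ω, Y ω))

/-- Conditional mutual information `I(X;Y|Z) = ∑ z P(Z = z) I(X;Y | Z = z)`, where the
inner mutual information is taken under the conditional measure given `Z = z`. -/
noncomputable def CMI {S T U : Type*} [Fintype S] [Fintype T] [Fintype U]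
    (μ : Measure Ω) (X : Ω → S) (Y : Ω → T) (Z : Ω → U) : ℝ :=
  ∑ z, pr μ Z z * MI (ProbabilityTheory.cond μ {ω | Z ω = z}) X Y

/-- `X` and `Y` are conditionally independent given `Z`
(written `X ⊥ Y | Z`): for all values,
`P(X = x, Y = y, Z = z) ⬝ P(Z = z) = P(X = x, Z = z) ⬝ P(Y = y, Z = z)`. -/
def CondIndep {S T U : Type*} (μ : Measure Ω) (X : Ω → S) (Y : Ω → T) (Z : Ω → U) : Prop :=
  ∀ (x : S) (y : T) (z : U),
    pr μ (fun ω => (X ω, Y ω, Z ω)) (x, y, z) * pr μ Z z =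
      pr μ (fun ω => (X ω, Z ω)) (x, z) * pr μ (fun ω => (Y ω, Z ω)) (y, z)

section Entropy

variable {μ : Measure Ω}

lemma pr_nonneg {S : Type*} (X : Ω → S) (x : S) : 0 ≤ pr μ X x := ENNReal.toReal_nonneg

lemma pr_le_pr_of_imp [IsFiniteMeasure μ] {S T : Type*} {X : Ω → S} {Y : Ω → T}
    {x : S} {y : T} (h : ∀ ω, X ω = x → Y ω = y) : pr μ X x ≤ pr μ Y y :=
  ENNReal.toReal_mono (measure_ne_top μ _) (measure_mono h)

lemma pr_comp_eq_sum [IsFiniteMeasure μ] {S T : Type*} [Fintype S] [DecidableEq T]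
    [MeasurableSpace S] [MeasurableSingletonClass S] {X : Ω → S} (hX : Measurable X)
    (g : S → T) (t : T) :
    pr μ (fun ω => g (X ω)) t = ∑ s with g s = t, pr μ X s := by
  change μ.real _ = ∑ s with g s = t, μ.real (X ⁻¹' {s})
  rw [sum_measureReal_preimage_singleton _ fun s _ => hX (measurableSet_singleton s)]
  congr 1
  ext ω
  simp

lemma sum_pr_mul_comp [IsFiniteMeasure μ] {S T : Type*} [Fintype S] [Fintype T]
    [MeasurableSpace S] [MeasurableSingletonClass S] {X : Ω → S} (hX : Measurable X)
    (g : S → T) (f : T → ℝ) {Y : Ω → T} (hY : ∀ ω, Y ω = g (X ω)) :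
    ∑ s, pr μ X s * f (g s) = ∑ t, pr μ Y t * f t := by
  classical
  obtain rfl : Y = fun ω => g (X ω) := funext hY
  simp only [pr_comp_eq_sum hX, Finset.sum_mul]
  rw [← Finset.sum_fiberwise _ g]
  refine Finset.sum_congr rfl fun t _ => Finset.sum_congr rfl fun s hs => ?_
  rw [(Finset.mem_filter.mp hs).2]

lemma pr_cond_mul_pr [IsFiniteMeasure μ] {S U : Type*} [MeasurableSpace U]
    [MeasurableSingletonClass U] {Z : Ω → U} (hZ : Measurable Z) (X : Ω → S) (x : S) (z : U) :
    pr (cond μ {ω | Z ω = z}) X x * pr μ Z z = pr μ (fun ω => (X ω, Z ω)) (x, z) := by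
  have hinter : {ω | Z ω = z} ∩ {ω | X ω = x} = {ω | (X ω, Z ω) = (x, z)} := by
    ext ω
    simp [and_comm]
  unfold pr
  have hmeas : MeasurableSet {ω | Z ω = z} := hZ (measurableSet_singleton z)
  rw [cond_apply hmeas, hinter, ENNReal.toReal_mul, ENNReal.toReal_inv]
  rcases eq_or_ne (μ {ω | Z ω = z}).toReal 0 with h0 | h0
  · have hsub : (μ {ω | (X ω, Z ω) = (x, z)}).toReal = 0 :=
      le_antisymm (h0 ▸ pr_le_pr_of_imp fun ω h => (Prod.ext_iff.mp h).2) ENNReal.toReal_nonneg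
    rw [h0, mul_zero]
    exact hsub.symm
  · field_simp

lemma H_eq_of_equiv {S S' : Type*} [Fintype S] [Fintype S'] (e : S ≃ S') {X : Ω → S}
    {Y : Ω → S'} (hY : ∀ ω, Y ω = e (X ω)) : H μ Y = H μ X := by
  obtain rfl : Y = fun ω => e (X ω) := funext hY
  unfold H
  rw [← e.sum_comp]
  have hpr : ∀ s, pr μ (fun ω => e (X ω)) (e s) = pr μ X s := fun s => by
    simp only [pr, e.apply_eq_iff_eq]
  simp only [hpr]

lemma H_prodComm {S T : Type*} [Fintype S] [Fintype T] (X : Ω → S) (Y : Ω → T) :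
    H μ (fun ω => (X ω, Y ω)) = H μ (fun ω => (Y ω, X ω)) :=
  H_eq_of_equiv (Equiv.prodComm T S) fun _ => rfl

lemma mul_log_mul (a b : ℝ) :
    (a * b) * Real.log (a * b) = b * (a * Real.log a) + (a * b) * Real.log b := by
  rcases eq_or_ne a 0 with ha | ha
  · simp [ha]
  rcases eq_or_ne b 0 with hb | hb
  · simp [hb]
  rw [Real.log_mul ha hb]
  ring

lemma H_pair_eq_H_add_condH [IsFiniteMeasure μ] {S U : Type*} [Fintype S] [Fintype U]
    [MeasurableSpace S] [MeasurableSingletonClass S]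
    [MeasurableSpace U] [MeasurableSingletonClass U]
    {X : Ω → S} {Z : Ω → U} (hX : Measurable X) (hZ : Measurable Z) :
    H μ (fun ω => (X ω, Z ω)) = H μ Z + condH μ X Z := by
  have hterm : ∀ w : S × U,
      pr μ (fun ω => (X ω, Z ω)) w * Real.log (pr μ (fun ω => (X ω, Z ω)) w)
        = pr μ Z w.2 * (pr (cond μ {ω | Z ω = w.2}) X w.1 *
            Real.log (pr (cond μ {ω | Z ω = w.2}) X w.1))
          + pr μ (fun ω => (X ω, Z ω)) w * Real.log (pr μ Z w.2) := by
    rintro ⟨x, z⟩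
    rw [← pr_cond_mul_pr hZ X x z]
    exact mul_log_mul _ _
  have hmarg : ∑ w : S × U, pr μ (fun ω => (X ω, Z ω)) w * Real.log (pr μ Z w.2)
      = ∑ z, pr μ Z z * Real.log (pr μ Z z) :=
    sum_pr_mul_comp (hX.prodMk hZ) Prod.snd (fun z => Real.log (pr μ Z z)) fun _ => rfl
  unfold condH H
  rw [Finset.sum_congr rfl fun w _ => hterm w, Finset.sum_add_distrib, hmarg,
    Fintype.sum_prod_type_right]
  simp only [← Finset.mul_sum, mul_neg, Finset.sum_neg_distrib]
  ring

lemma CMI_eq_H [IsFiniteMeasure μ] {S T U : Type*} [Fintype S] [Fintype T] [Fintype U]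
    [MeasurableSpace S] [MeasurableSingletonClass S]
    [MeasurableSpace T] [MeasurableSingletonClass T]
    [MeasurableSpace U] [MeasurableSingletonClass U]
    {X : Ω → S} {Y : Ω → T} {Z : Ω → U}
    (hX : Measurable X) (hY : Measurable Y) (hZ : Measurable Z) :
    CMI μ X Y Z = H μ (fun ω => (X ω, Z ω)) + H μ (fun ω => (Y ω, Z ω))
      - H μ (fun ω => (X ω, Y ω, Z ω)) - H μ Z := by
  have hcondH :
      CMI μ X Y Z = condH μ X Z + condH μ Y Z - condH μ (fun ω => (X ω, Y ω)) Z := by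
    unfold CMI MI condH
    rw [← Finset.sum_add_distrib, ← Finset.sum_sub_distrib]
    exact Finset.sum_congr rfl fun z _ => by ring
  have hassoc : H μ (fun ω => ((X ω, Y ω), Z ω)) = H μ (fun ω => (X ω, Y ω, Z ω)) :=
    H_eq_of_equiv (Equiv.prodAssoc S T U).symm fun _ => rfl
  rw [hcondH, H_pair_eq_H_add_condH hX hZ, H_pair_eq_H_add_condH hY hZ, ← hassoc,
    H_pair_eq_H_add_condH (hX.prodMk hY) hZ]
  ring

lemma mul_log_add_mul_log_eq_of_mul_eq {p c a b : ℝ} (h : p * c = a * b)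
    (hc : c = 0 → p = 0) :
    p * Real.log p + p * Real.log c = p * Real.log a + p * Real.log b := by
  rcases eq_or_ne p 0 with hp | hp
  · simp [hp]
  have hab : a * b ≠ 0 := h ▸ mul_ne_zero hp (mt hc hp)
  rw [← mul_add, ← mul_add, ← Real.log_mul hp (mt hc hp), h,
    Real.log_mul (left_ne_zero_of_mul hab) (right_ne_zero_of_mul hab)]

lemma H_triple_add_H_eq_of_condIndep [IsFiniteMeasure μ] {S T U : Type*}
    [Fintype S] [Fintype T] [Fintype U]
    [MeasurableSpace S] [MeasurableSingletonClass S]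
    [MeasurableSpace T] [MeasurableSingletonClass T]
    [MeasurableSpace U] [MeasurableSingletonClass U]
    {X : Ω → S} {Y : Ω → T} {Z : Ω → U}
    (hX : Measurable X) (hY : Measurable Y) (hZ : Measurable Z) (h : CondIndep μ X Y Z) :
    H μ (fun ω => (X ω, Y ω, Z ω)) + H μ Z
      = H μ (fun ω => (X ω, Z ω)) + H μ (fun ω => (Y ω, Z ω)) := by
  set W : Ω → S × T × U := fun ω => (X ω, Y ω, Z ω)
  have hW : Measurable W := hX.prodMk (hY.prodMk hZ)
  have hterm : ∀ w : S × T × U,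
      pr μ W w * Real.log (pr μ W w) + pr μ W w * Real.log (pr μ Z w.2.2)
        = pr μ W w * Real.log (pr μ (fun ω => (X ω, Z ω)) (w.1, w.2.2))
          + pr μ W w * Real.log (pr μ (fun ω => (Y ω, Z ω)) (w.2.1, w.2.2)) := by
    rintro ⟨x, y, z⟩
    refine mul_log_add_mul_log_eq_of_mul_eq (h x y z) fun hc => le_antisymm ?_ (pr_nonneg _ _)
    exact hc ▸ pr_le_pr_of_imp fun ω hω => (Prod.ext_iff.mp (Prod.ext_iff.mp hω).2).2
  have hZ' :
      ∑ w, pr μ W w * Real.log (pr μ Z w.2.2) = ∑ z, pr μ Z z * Real.log (pr μ Z z) :=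
    sum_pr_mul_comp hW (fun w => w.2.2) (fun z => Real.log (pr μ Z z)) fun _ => rfl
  have hXZ : ∑ w, pr μ W w * Real.log (pr μ (fun ω => (X ω, Z ω)) (w.1, w.2.2))
      = ∑ v, pr μ (fun ω => (X ω, Z ω)) v * Real.log (pr μ (fun ω => (X ω, Z ω)) v) :=
    sum_pr_mul_comp hW (fun w => (w.1, w.2.2))
      (fun v => Real.log (pr μ (fun ω => (X ω, Z ω)) v)) fun _ => rfl
  have hYZ : ∑ w, pr μ W w * Real.log (pr μ (fun ω => (Y ω, Z ω)) (w.2.1, w.2.2))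
      = ∑ v, pr μ (fun ω => (Y ω, Z ω)) v * Real.log (pr μ (fun ω => (Y ω, Z ω)) v) :=
    sum_pr_mul_comp hW (fun w => (w.2.1, w.2.2))
      (fun v => Real.log (pr μ (fun ω => (Y ω, Z ω)) v)) fun _ => rfl
  have hsum := Finset.sum_congr rfl fun w (_ : w ∈ Finset.univ) => hterm w
  rw [Finset.sum_add_distrib, Finset.sum_add_distrib, hZ', hXZ, hYZ] at hsum
  unfold H
  linarith

lemma CMI_eq_MI_sub_MI_of_condIndep [IsFiniteMeasure μ] {S T U : Type*}
    [Fintype S] [Fintype T] [Fintype U]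
    [MeasurableSpace S] [MeasurableSingletonClass S]
    [MeasurableSpace T] [MeasurableSingletonClass T]
    [MeasurableSpace U] [MeasurableSingletonClass U]
    {X : Ω → S} {Y : Ω → T} {Z : Ω → U}
    (hX : Measurable X) (hY : Measurable Y) (hZ : Measurable Z) (h : CondIndep μ X Y Z) :
    CMI μ Z X Y = MI μ Z X - MI μ Y X := by
  have hindep := H_triple_add_H_eq_of_condIndep hX hY hZ h
  have hrot : H μ (fun ω => (Z ω, X ω, Y ω)) = H μ (fun ω => (X ω, Y ω, Z ω)) :=
    H_eq_of_equiv ((Equiv.prodAssoc S T U).symm.trans (Equiv.prodComm _ _)) fun _ => rfl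
  rw [CMI_eq_H hZ hX hY]
  unfold MI
  linarith [H_prodComm (μ := μ) Z Y, H_prodComm (μ := μ) X Y, H_prodComm (μ := μ) Z X]

end Entropy

theorem modality_invariant_objective_eq_ib_general
    {SV ST SVS STS : Type*}
    [Fintype SV] [MeasurableSpace SV] [MeasurableSingletonClass SV]
    [Fintype ST] [MeasurableSpace ST] [MeasurableSingletonClass ST]
    [Fintype SVS] [MeasurableSpace SVS] [MeasurableSingletonClass SVS]
    [Fintype STS] [MeasurableSpace STS] [MeasurableSingletonClass STS]
    (β₁ : ℝ)
    (μ : Measure Ω) [IsProbabilityMeasure μ]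
    (V : Ω → SV) (T : Ω → ST) (VS : Ω → SVS) (TS : Ω → STS)
    (hV : Measurable V) (hT : Measurable T) (hVS : Measurable VS) (hTS : Measurable TS)
    (h1 : CondIndep μ VS T V) (h2 : CondIndep μ TS V T) :
    -(MI μ T VS + MI μ V TS) + β₁ * (CMI μ V VS T + CMI μ T TS V) =
      -(1 + β₁) * (MI μ T VS + MI μ V TS) + β₁ * (MI μ V VS + MI μ T TS) := by
  rw [CMI_eq_MI_sub_MI_of_condIndep hVS hT hV h1, CMI_eq_MI_sub_MI_of_condIndep hTS hV hT h2]
  ring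

/-- If `V_S ⊥ T | V` and `T_S ⊥ V | T`, then the modality-invariant
objective `L_S = −(I(T;V_S) + I(V;T_S)) + β₁(I(V;V_S|T) + I(T;T_S|V))` equals the
information-bottleneck form `−(1+β₁)(I(T;V_S) + I(V;T_S)) + β₁(I(V;V_S) + I(T;T_S))`. -/
theorem modality_invariant_objective_eq_ib
    {SV ST SVS STS : Type*}
    [Fintype SV] [Nonempty SV] [MeasurableSpace SV] [MeasurableSingletonClass SV]
    [Fintype ST] [Nonempty ST] [MeasurableSpace ST] [MeasurableSingletonClass ST]
    [Fintype SVS] [Nonempty SVS] [MeasurableSpace SVS] [MeasurableSingletonClass SVS]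
    [Fintype STS] [Nonempty STS] [MeasurableSpace STS] [MeasurableSingletonClass STS]
    (β₁ : ℝ)
    (μ : Measure Ω) [IsProbabilityMeasure μ]
    (V : Ω → SV) (T : Ω → ST) (VS : Ω → SVS) (TS : Ω → STS)
    (hV : Measurable V) (hT : Measurable T) (hVS : Measurable VS) (hTS : Measurable TS)
    (h1 : CondIndep μ VS T V) (h2 : CondIndep μ TS V T) :
    -(MI μ T VS + MI μ V TS) + β₁ * (CMI μ V VS T + CMI μ T TS V) =
      -(1 + β₁) * (MI μ T VS + MI μ V TS) + β₁ * (MI μ V VS + MI μ T TS) :=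
  modality_invariant_objective_eq_ib_general β₁ μ V T VS TS hV hT hVS hTS h1 h2

end DisNCL
end

section
/- (Noisy-risk decomposition under symmetric label noise.) Let C ≥ 2 be an integer, let (X, y) be a random instance–label pair with y taking values in {1,…,C}, and let ỹ be the symmetrically corrupted label with noise rate η ∈ [0,1): conditionally on (X, y), ỹ = y with probability 1 − η and ỹ = j with probability η/(C−1) for each j ≠ y. Let f be a measurable classifier and ℓ a bounded measurable loss. Then the noisy risk satisfies R_η(f) := E[ℓ(f(X), ỹ)] = (1 − ηC/(C−1)) · R(f) + (η/(C−1)) · E[ ∑_{j=1}^{C} ℓ(f(X), j) ], where R(f) := E[ℓ(f(X), y)] is the clean risk. -/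
open MeasureTheory

namespace DisNCL

/-- **Noisy-risk decomposition under symmetric label noise.**
Labels take values in `Fin C` (a label set of size `C ≥ 2`). The random instance–label
pair is `(X, y)` on a probability space `(Ω, μ)`, and `ỹ` is the symmetrically corrupted
label: conditionally on `(X, y)`, `ỹ = y` with probability `1 − η` and `ỹ = j` with
probability `η/(C−1)` for each `j ≠ y`. Then for a measurable classifier `f` and a
bounded measurable loss `ℓ`, the noisy risk `R_η(f) = E[ℓ(f(X), ỹ)]` satisfies
`R_η(f) = (1 − ηC/(C−1)) · R(f) + (η/(C−1)) · E[∑ j, ℓ(f(X), j)]`, where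
`R(f) = E[ℓ(f(X), y)]` is the clean risk. -/
theorem noisy_risk_decomposition
    {Ω 𝒳 P : Type*} [MeasurableSpace Ω] [MeasurableSpace 𝒳] [MeasurableSpace P]
    (μ : Measure Ω) [IsProbabilityMeasure μ]
    (C : ℕ) (hC : 2 ≤ C)
    (X : Ω → 𝒳) (y : Ω → Fin C) (ytilde : Ω → Fin C)
    (hX : Measurable X) (hy : Measurable y) (hyt : Measurable ytilde)
    (η : ℝ) (hη0 : 0 ≤ η) (hη1 : η < 1)
    (hnoise : ∀ (A : Set 𝒳), MeasurableSet A → ∀ (i j : Fin C),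
      μ {ω | X ω ∈ A ∧ y ω = i ∧ ytilde ω = j} =
        ENNReal.ofReal (if j = i then 1 - η else η / ((C : ℝ) - 1)) *
          μ {ω | X ω ∈ A ∧ y ω = i})
    (f : 𝒳 → P) (hf : Measurable f)
    (ℓ : P → Fin C → ℝ) (hℓ : ∀ j, Measurable (fun u => ℓ u j))
    (hbdd : ∃ M : ℝ, ∀ u j, |ℓ u j| ≤ M) :
    ∫ ω, ℓ (f (X ω)) (ytilde ω) ∂μ =
      (1 - η * C / ((C : ℝ) - 1)) * ∫ ω, ℓ (f (X ω)) (y ω) ∂μ +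
        η / ((C : ℝ) - 1) * ∫ ω, (∑ j, ℓ (f (X ω)) j) ∂μ := by
  classical
  obtain ⟨M, hM⟩ := hbdd
  have hC1 : (0:ℝ) < (C:ℝ) - 1 := by
    have : (2:ℝ) ≤ (C:ℝ) := by exact_mod_cast hC
    linarith
  set g : Fin C → Ω → ℝ := fun j ω => ℓ (f (X ω)) j with hg_def
  have hgmeas : ∀ j, Measurable (g j) := fun j => (hℓ j).comp (hf.comp hX)
  have hgint : ∀ (j : Fin C) (ν : Measure Ω) [IsFiniteMeasure ν], Integrable (g j) ν := by
    intro j ν _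
    refine ⟨(hgmeas j).aestronglyMeasurable, HasFiniteIntegral.of_bounded (C := M) ?_⟩
    exact ae_of_all _ fun ω => by simpa [Real.norm_eq_abs, hg_def] using hM (f (X ω)) j
  set T : Fin C → Set Ω := fun i => {ω | y ω = i} with hT_def
  set S : Fin C → Fin C → Set Ω := fun i j => {ω | y ω = i ∧ ytilde ω = j} with hS_def
  have hTmeas : ∀ i, MeasurableSet (T i) := fun i => hy (measurableSet_singleton i)
  have hSmeas : ∀ i j, MeasurableSet (S i j) := fun i j =>
    (hTmeas i).inter (hyt (measurableSet_singleton j))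
  -- abbreviation for the coefficients
  set c : Fin C → Fin C → ℝ := fun i j => if j = i then 1 - η else η / ((C:ℝ) - 1) with hc_def
  have hc0 : ∀ i j, 0 ≤ c i j := by
    intro i j
    simp only [hc_def]
    split
    · linarith
    · positivity
  -- Key step: the noise condition transfers to integrals of functions of X
  have keyA : ∀ i j, ∫ ω in S i j, g j ω ∂μ = c i j * ∫ ω in T i, g j ω ∂μ := by
    intro i j
    have hmap : Measure.map X (μ.restrict (S i j)) =
        ENNReal.ofReal (c i j) • Measure.map X (μ.restrict (T i)) := by
      ext A hA
      rw [Measure.map_apply hX hA, Measure.smul_apply, Measure.map_apply hX hA,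
        Measure.restrict_apply (hX hA), Measure.restrict_apply (hX hA), smul_eq_mul]
      have h1 : X ⁻¹' A ∩ S i j = {ω | X ω ∈ A ∧ y ω = i ∧ ytilde ω = j} := by
        ext ω; simp [hS_def]
      have h2 : X ⁻¹' A ∩ T i = {ω | X ω ∈ A ∧ y ω = i} := by
        ext ω; simp [hT_def]
      rw [h1, h2, hnoise A hA i j]
    calc ∫ ω in S i j, g j ω ∂μ
        = ∫ x, ℓ (f x) j ∂(Measure.map X (μ.restrict (S i j))) :=
          (integral_map hX.aemeasurable ((hℓ j).comp hf).aestronglyMeasurable).symm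
      _ = c i j * ∫ x, ℓ (f x) j ∂(Measure.map X (μ.restrict (T i))) := by
          rw [hmap, integral_smul_measure, ENNReal.toReal_ofReal (hc0 i j), smul_eq_mul]
      _ = c i j * ∫ ω in T i, g j ω ∂μ := by
          congr 1
          exact integral_map hX.aemeasurable ((hℓ j).comp hf).aestronglyMeasurable
  -- partitioning the integral over the values of y
  have hpart : ∀ h : Ω → ℝ, Integrable h μ → ∫ ω, h ω ∂μ = ∑ i, ∫ ω in T i, h ω ∂μ := by
    intro h hh
    have heq : ∀ ω, h ω = ∑ i, (T i).indicator h ω := by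
      intro ω
      simp [Set.indicator_apply, hT_def, Finset.sum_ite_eq]
    rw [integral_congr_ae (ae_of_all _ heq),
      integral_finset_sum _ (fun i _ => hh.indicator (hTmeas i))]
    exact Finset.sum_congr rfl fun i _ => integral_indicator (hTmeas i)
  -- partitioning the integral over the values of (y, ytilde)
  have hpart2 : ∀ h : Ω → ℝ, Integrable h μ →
      ∫ ω, h ω ∂μ = ∑ i, ∑ j, ∫ ω in S i j, h ω ∂μ := by
    intro h hh
    have heq : ∀ ω, h ω = ∑ i, ∑ j, (S i j).indicator h ω := by
      intro ω
      simp [Set.indicator_apply, hS_def, ite_and, Finset.sum_ite_eq]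
    rw [integral_congr_ae (ae_of_all _ heq),
      integral_finset_sum _ (fun i _ => integrable_finset_sum _
        (fun j _ => hh.indicator (hSmeas i j)))]
    refine Finset.sum_congr rfl fun i _ => ?_
    rw [integral_finset_sum _ (fun j _ => hh.indicator (hSmeas i j))]
    exact Finset.sum_congr rfl fun j _ => integral_indicator (hSmeas i j)
  -- integrability of the main integrands
  have hint1 : Integrable (fun ω => ℓ (f (X ω)) (ytilde ω)) μ := by
    have heq : (fun ω => ℓ (f (X ω)) (ytilde ω)) =
        fun ω => ∑ j, ({ω | ytilde ω = j} : Set Ω).indicator (g j) ω := by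
      funext ω
      simp [Set.indicator_apply, Finset.sum_ite_eq, hg_def]
    rw [heq]
    exact integrable_finset_sum _ fun j _ =>
      (hgint j μ).indicator (hyt (measurableSet_singleton j))
  have hint2 : Integrable (fun ω => ℓ (f (X ω)) (y ω)) μ := by
    have heq : (fun ω => ℓ (f (X ω)) (y ω)) =
        fun ω => ∑ j, (T j).indicator (g j) ω := by
      funext ω
      simp [Set.indicator_apply, hT_def, Finset.sum_ite_eq, hg_def]
    rw [heq]
    exact integrable_finset_sum _ fun j _ => (hgint j μ).indicator (hTmeas j)
  have hint3 : Integrable (fun ω => ∑ j, ℓ (f (X ω)) j) μ :=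
    integrable_finset_sum _ fun j _ => hgint j μ
  -- rewrite the left-hand side
  have hLHS : ∫ ω, ℓ (f (X ω)) (ytilde ω) ∂μ =
      ∑ i, ∑ j, c i j * ∫ ω in T i, g j ω ∂μ := by
    rw [hpart2 _ hint1]
    refine Finset.sum_congr rfl fun i _ => Finset.sum_congr rfl fun j _ => ?_
    rw [← keyA i j]
    refine setIntegral_congr_fun (hSmeas i j) fun ω hω => ?_
    have : ytilde ω = j := hω.2
    simp [hg_def, this]
  -- rewrite the clean risk
  have hR : ∫ ω, ℓ (f (X ω)) (y ω) ∂μ = ∑ i, ∫ ω in T i, g i ω ∂μ := by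
    rw [hpart _ hint2]
    refine Finset.sum_congr rfl fun i _ => ?_
    refine setIntegral_congr_fun (hTmeas i) fun ω hω => ?_
    have : y ω = i := hω
    simp [hg_def, this]
  -- rewrite the sum term
  have hSum : ∫ ω, (∑ j, ℓ (f (X ω)) j) ∂μ = ∑ i, ∑ j, ∫ ω in T i, g j ω ∂μ := by
    rw [hpart _ hint3]
    refine Finset.sum_congr rfl fun i _ => ?_
    rw [integral_finset_sum _ (fun j _ => hgint j (μ.restrict (T i)))]
  rw [hLHS, hR, hSum]
  -- pure algebra
  have hcoef : 1 - η - η / ((C:ℝ) - 1) = 1 - η * C / ((C:ℝ) - 1) := by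
    field_simp
    ring
  rw [Finset.mul_sum, Finset.mul_sum]
  rw [← Finset.sum_add_distrib]
  refine Finset.sum_congr rfl fun i _ => ?_
  rw [Finset.mul_sum]
  have hsplit : ∀ j : Fin C, c i j * ∫ ω in T i, g j ω ∂μ =
      η / ((C:ℝ) - 1) * ∫ ω in T i, g j ω ∂μ +
        (if j = i then (1 - η - η / ((C:ℝ) - 1)) * ∫ ω in T i, g j ω ∂μ else 0) := by
    intro j
    simp only [hc_def]
    split <;> ring
  rw [Finset.sum_congr rfl fun j _ => hsplit j, Finset.sum_add_distrib,
    Finset.sum_ite_eq' Finset.univ i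
      (fun j => (1 - η - η / ((C:ℝ) - 1)) * ∫ ω in T i, g j ω ∂μ)]
  simp [hcoef]
  ring

end DisNCL
end

section
/- (Noise robustness of the softened alignment loss; formal content of the paper's Theorem on noise robustness.) Let C ≥ 2 be an integer and ℓ a bounded measurable loss that is symmetric, i.e., there is a constant K with ∑_{j=1}^{C} ℓ(u, j) = K for every prediction u. Under symmetric label noise with rate η satisfying η < 1 − 1/C, for all measurable classifiers f and f′ one has R_η(f) − R_η(f′) = (1 − ηC/(C−1)) · (R(f) − R(f′)), and the coefficient 1 − ηC/(C−1) is strictly positive; consequently f minimizes the clean risk R over any class of classifiers if and only if f minimizes the noisy risk R_η over that class. -/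
/-!
Conditionally on `X` and `y = i`, the noisy label has law `T i ·`, so the noisy risk is the clean
expectation of `∑ j, T y j * ℓ(f X, j)`. For symmetric noise
`∑ j, T i j * v j = (1 - η C / (C - 1)) * v i + η / (C - 1) * ∑ j, v j`, and for a symmetric loss
the last sum is the constant `K`. Hence `R_η = (1 - η C / (C - 1)) * R + η K / (C - 1)`, an
increasing affine function of `R` as soon as `η < 1 - 1 / C`.
-/

open MeasureTheory

namespace DisNCL

noncomputable def symmetricNoise (C : ℕ) (η : ℝ) (i j : Fin C) : ℝ :=
  if j = i then 1 - η else η / ((C : ℝ) - 1)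

theorem symmetricNoise_nonneg {C : ℕ} {η : ℝ} (hη0 : 0 ≤ η) (hη1 : η ≤ 1) (i j : Fin C) :
    0 ≤ symmetricNoise C η i j := by
  have hC : (1 : ℝ) ≤ C := Nat.one_le_cast.mpr i.pos
  unfold symmetricNoise
  split_ifs
  · linarith
  · exact div_nonneg hη0 (by linarith)

theorem sum_symmetricNoise_mul {C : ℕ} (hC : C ≠ 1) (η : ℝ) (v : Fin C → ℝ) (i : Fin C) :
    ∑ j, symmetricNoise C η i j * v j =
      (1 - η * C / ((C : ℝ) - 1)) * v i + η / ((C : ℝ) - 1) * ∑ j, v j := by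
  have hC' : (C : ℝ) - 1 ≠ 0 := sub_ne_zero.mpr (Nat.cast_ne_one.mpr hC)
  have hoff : ∀ j ∈ ({i}ᶜ : Finset (Fin C)), symmetricNoise C η i j * v j =
      η / ((C : ℝ) - 1) * v j := fun j hj => by
    rw [symmetricNoise, if_neg (by simpa using hj)]
  rw [Fintype.sum_eq_add_sum_compl i, Fintype.sum_eq_add_sum_compl i v, Finset.sum_congr rfl hoff,
    ← Finset.mul_sum, symmetricNoise, if_pos rfl]
  field_simp
  ring

theorem one_sub_mul_div_sub_one_pos {c η : ℝ} (hc : 1 < c) (hη : η < 1 - 1 / c) :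
    0 < 1 - η * c / (c - 1) := by
  rw [sub_pos, div_lt_one (by linarith)]
  have := mul_lt_mul_of_pos_right hη (by linarith : 0 < c)
  rwa [sub_mul, one_div, inv_mul_cancel₀ (by linarith), one_mul] at this

section NoisyRisk

variable {Ω 𝒳 : Type*} [MeasurableSpace Ω] [MeasurableSpace 𝒳] {μ : Measure Ω}

theorem integral_eq_sum_setIntegral_fiber {ι : Type*} [Fintype ι] [MeasurableSpace ι]
    [MeasurableSingletonClass ι] {z : Ω → ι} (hz : Measurable z) (h : Ω → ι → ℝ)
    (hh : ∀ k, Integrable (h · k) μ) :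
    ∫ ω, h ω (z ω) ∂μ = ∑ k, ∫ ω in z ⁻¹' {k}, h ω k ∂μ := by
  have hfiber : ∀ k, MeasurableSet (z ⁻¹' {k}) := fun k => hz (measurableSet_singleton k)
  have hsplit : ∀ ω, h ω (z ω) = ∑ k, (z ⁻¹' {k}).indicator (h · k) ω := fun ω => by
    classical
    simp [Set.indicator_apply]
  simp_rw [hsplit]
  rw [integral_finsetSum _ fun k _ => (hh k).indicator (hfiber k)]
  exact Finset.sum_congr rfl fun k _ => integral_indicator (hfiber k)

theorem setIntegral_comp_eq_mul_of_measure_preimage_inter {X : Ω → 𝒳} (hX : Measurable X)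
    {S S' : Set Ω} {c : ENNReal}
    (h : ∀ A, MeasurableSet A → μ (X ⁻¹' A ∩ S) = c * μ (X ⁻¹' A ∩ S'))
    {φ : 𝒳 → ℝ} (hφ : Measurable φ) :
    ∫ ω in S, φ (X ω) ∂μ = c.toReal * ∫ ω in S', φ (X ω) ∂μ := by
  have hmap : (μ.restrict S).map X = c • (μ.restrict S').map X := by
    ext A hA
    rw [Measure.map_apply hX hA, Measure.smul_apply, Measure.map_apply hX hA,
      Measure.restrict_apply (hX hA), Measure.restrict_apply (hX hA), h A hA, smul_eq_mul]
  rw [← integral_map hX.aemeasurable hφ.aestronglyMeasurable, hmap, integral_smul_measure,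
    integral_map hX.aemeasurable hφ.aestronglyMeasurable, smul_eq_mul]

theorem integral_comp_noisyLabel_eq_integral_sum_transition
    {ι κ : Type*} [Fintype ι] [MeasurableSpace ι] [MeasurableSingletonClass ι]
    [Fintype κ] [MeasurableSpace κ] [MeasurableSingletonClass κ]
    {X : Ω → 𝒳} {y : Ω → ι} {y' : Ω → κ} (hX : Measurable X) (hy : Measurable y)
    (hy' : Measurable y') {T : ι → κ → ℝ} (hT : ∀ i j, 0 ≤ T i j)
    (hnoise : ∀ A, MeasurableSet A → ∀ i j, μ {ω | X ω ∈ A ∧ y ω = i ∧ y' ω = j} =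
      ENNReal.ofReal (T i j) * μ {ω | X ω ∈ A ∧ y ω = i})
    {g : 𝒳 → κ → ℝ} (hg : ∀ j, Measurable (g · j))
    (hgi : ∀ j, Integrable (fun ω => g (X ω) j) μ) :
    ∫ ω, g (X ω) (y' ω) ∂μ = ∫ ω, ∑ j, T (y ω) j * g (X ω) j ∂μ := by
  have hpair : ∀ i j, ∫ ω in (fun ω => (y ω, y' ω)) ⁻¹' {(i, j)}, g (X ω) j ∂μ =
      T i j * ∫ ω in y ⁻¹' {i}, g (X ω) j ∂μ := fun i j => by
    have hS : (fun ω => (y ω, y' ω)) ⁻¹' {(i, j)} = {ω | y ω = i ∧ y' ω = j} := by ext; simp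
    rw [hS, setIntegral_comp_eq_mul_of_measure_preimage_inter hX
      (S := {ω | y ω = i ∧ y' ω = j}) (S' := y ⁻¹' {i})
      (hnoise · · i j) (hg j), ENNReal.toReal_ofReal (hT i j)]
  calc ∫ ω, g (X ω) (y' ω) ∂μ
      = ∑ p : ι × κ, ∫ ω in (fun ω => (y ω, y' ω)) ⁻¹' {p}, g (X ω) p.2 ∂μ :=
        integral_eq_sum_setIntegral_fiber (hy.prodMk hy') (fun ω p => g (X ω) p.2) (hgi ·.2)
    _ = ∑ i, ∑ j, T i j * ∫ ω in y ⁻¹' {i}, g (X ω) j ∂μ := by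
        simp_rw [Fintype.sum_prod_type, hpair]
    _ = ∑ i, ∫ ω in y ⁻¹' {i}, ∑ j, T i j * g (X ω) j ∂μ := by
        simp_rw [integral_finsetSum _ fun j _ => ((hgi j).const_mul (T _ j)).restrict,
          integral_const_mul]
    _ = ∫ ω, ∑ j, T (y ω) j * g (X ω) j ∂μ :=
        (integral_eq_sum_setIntegral_fiber hy (fun ω i => ∑ j, T i j * g (X ω) j)
          fun i => integrable_finsetSum _ fun j _ => (hgi j).const_mul _).symm

theorem integral_comp_symmetricNoise_eq [IsProbabilityMeasure μ] {C : ℕ} (hC : C ≠ 1)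
    {X : Ω → 𝒳} {y y' : Ω → Fin C} (hX : Measurable X) (hy : Measurable y) (hy' : Measurable y')
    {η : ℝ} (hη0 : 0 ≤ η) (hη1 : η ≤ 1)
    (hnoise : ∀ A, MeasurableSet A → ∀ i j, μ {ω | X ω ∈ A ∧ y ω = i ∧ y' ω = j} =
      ENNReal.ofReal (symmetricNoise C η i j) * μ {ω | X ω ∈ A ∧ y ω = i})
    {g : 𝒳 → Fin C → ℝ} (hg : ∀ j, Measurable (g · j)) {M : ℝ} (hM : ∀ x j, |g x j| ≤ M)
    {K : ℝ} (hK : ∀ x, ∑ j, g x j = K) :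
    ∫ ω, g (X ω) (y' ω) ∂μ =
      (1 - η * C / ((C : ℝ) - 1)) * ∫ ω, g (X ω) (y ω) ∂μ + η / ((C : ℝ) - 1) * K := by
  have hint : ∀ z : Ω → Fin C, Measurable z → Integrable (fun ω => g (X ω) (z ω)) μ :=
    fun z hz => .of_bound
      ((measurable_from_prod_countable_left (f := fun p => g p.1 p.2) hg).comp
        (hX.prodMk hz)).aestronglyMeasurable
      M (ae_of_all _ fun ω => (Real.norm_eq_abs _).trans_le (hM _ _))
  rw [integral_comp_noisyLabel_eq_integral_sum_transition hX hy hy'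
    (symmetricNoise_nonneg hη0 hη1) hnoise hg fun j => hint _ measurable_const]
  simp_rw [sum_symmetricNoise_mul hC, hK]
  rw [integral_add ((hint y hy).const_mul _) (integrable_const _), integral_const_mul]
  simp

end NoisyRisk

/-- **Noise robustness of the softened alignment loss.**
Labels take values in `Fin C` (a label set of size `C ≥ 2`), and `ℓ` is a bounded
measurable loss that is symmetric: `∑ j, ℓ(u, j) = K` for every prediction `u`.
Under symmetric label noise with rate `η < 1 − 1/C` (encoded by the joint law of
`(X, y, ỹ)`), for all measurable classifiers `f` and `f'` one has
`R_η(f) − R_η(f') = (1 − ηC/(C−1)) · (R(f) − R(f'))`, the coefficient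
`1 − ηC/(C−1)` is strictly positive, and consequently `f` minimizes the clean risk
`R` over any class of (measurable) classifiers iff `f` minimizes the noisy risk `R_η`
over that class. Here `R(f) = E[ℓ(f(X), y)]` and `R_η(f) = E[ℓ(f(X), ỹ)]`. -/
theorem noise_robustness_of_symmetric_loss
    {Ω 𝒳 P : Type*} [MeasurableSpace Ω] [MeasurableSpace 𝒳] [MeasurableSpace P]
    (μ : Measure Ω) [IsProbabilityMeasure μ]
    (C : ℕ) (hC : 2 ≤ C)
    (X : Ω → 𝒳) (y : Ω → Fin C) (ytilde : Ω → Fin C)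
    (hX : Measurable X) (hy : Measurable y) (hyt : Measurable ytilde)
    (η : ℝ) (hη0 : 0 ≤ η) (hη : η < 1 - 1 / (C : ℝ))
    (hnoise : ∀ (A : Set 𝒳), MeasurableSet A → ∀ (i j : Fin C),
      μ {ω | X ω ∈ A ∧ y ω = i ∧ ytilde ω = j} =
        ENNReal.ofReal (if j = i then 1 - η else η / ((C : ℝ) - 1)) *
          μ {ω | X ω ∈ A ∧ y ω = i})
    (ℓ : P → Fin C → ℝ) (hℓ : ∀ j, Measurable (fun u => ℓ u j))
    (hbdd : ∃ M : ℝ, ∀ u j, |ℓ u j| ≤ M)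
    (K : ℝ) (hsym : ∀ u : P, ∑ j, ℓ u j = K) :
    (∀ f f' : 𝒳 → P, Measurable f → Measurable f' →
      (∫ ω, ℓ (f (X ω)) (ytilde ω) ∂μ) - (∫ ω, ℓ (f' (X ω)) (ytilde ω) ∂μ) =
        (1 - η * C / ((C : ℝ) - 1)) *
          ((∫ ω, ℓ (f (X ω)) (y ω) ∂μ) - (∫ ω, ℓ (f' (X ω)) (y ω) ∂μ))) ∧
    0 < 1 - η * C / ((C : ℝ) - 1) ∧
    (∀ (F : Set (𝒳 → P)), (∀ g ∈ F, Measurable g) → ∀ f ∈ F,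
      ((∀ g ∈ F, (∫ ω, ℓ (f (X ω)) (y ω) ∂μ) ≤ ∫ ω, ℓ (g (X ω)) (y ω) ∂μ) ↔
        (∀ g ∈ F, (∫ ω, ℓ (f (X ω)) (ytilde ω) ∂μ) ≤ ∫ ω, ℓ (g (X ω)) (ytilde ω) ∂μ))) := by
  obtain ⟨M, hM⟩ := hbdd
  have hη1 : η ≤ 1 := by linarith [one_div_pos.mpr (by positivity : (0 : ℝ) < C)]
  have hb : 0 < 1 - η * C / ((C : ℝ) - 1) := one_sub_mul_div_sub_one_pos (by exact_mod_cast hC) hη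
  have hrisk : ∀ f : 𝒳 → P, Measurable f →
      ∫ ω, ℓ (f (X ω)) (ytilde ω) ∂μ = (1 - η * C / ((C : ℝ) - 1)) *
        ∫ ω, ℓ (f (X ω)) (y ω) ∂μ + η / ((C : ℝ) - 1) * K := fun f hf =>
    integral_comp_symmetricNoise_eq (by omega) hX hy hyt hη0 hη1 hnoise
      (fun j => (hℓ j).comp hf) (fun x => hM (f x)) (fun x => hsym (f x))
  refine ⟨fun f f' hf hf' => by rw [hrisk f hf, hrisk f' hf']; ring, hb,
    fun F hF f hf => forall₂_congr fun g hg => ?_⟩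
  rw [hrisk f (hF f hf), hrisk g (hF g hg), add_le_add_iff_right, mul_le_mul_iff_right₀ hb]

end DisNCL
end
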